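/- If H1 and H2 are simple finite hypergraphs, then their normal product H1⊠̌H2 is a simple hypergraph. -/

import Mathlib

/-!
Basic definitions: finite hypergraphs (a finite nonempty vertex set `V`, given by
`[Fintype V] [Nonempty V]`, together with a set of nonempty edges), walks, distance,
connectedness, simplicity, rank, colorings, Helly property, covers,
the various hypergraph products, 2-sections, and graph products.
-/

/-- A hypergraph on a vertex type `V`: a collection of nonempty edges (finite subsets of `V`). -/
structure FinsetHypergraph (V : Type*) where
  edges : Set (Finset V)
  nonempty_edges : ∀ e ∈ edges, e.Nonempty

namespace FinsetHypergraph

variable {V V₁ V₂ : Type*}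

/-- There is a walk of length `n` from `u` to `v`: a sequence of vertices `w 0, …, w n`
and edges `f 1, …, f n` with consecutive vertices distinct and both contained
in the corresponding edge. -/
def HasWalk (H : FinsetHypergraph V) (u v : V) (n : ℕ) : Prop :=
  ∃ (w : Fin (n + 1) → V) (f : Fin n → Finset V),
    w 0 = u ∧ w (Fin.last n) = v ∧
      ∀ i : Fin n, f i ∈ H.edges ∧ w i.castSucc ≠ w i.succ ∧
        w i.castSucc ∈ f i ∧ w i.succ ∈ f i

/-- The distance between two vertices: the minimum length of a walk joining them,
`⊤ = ∞` if there is none. -/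
noncomputable def dist (H : FinsetHypergraph V) (u v : V) : ℕ∞ :=
  sInf {x : ℕ∞ | ∃ n : ℕ, x = n ∧ H.HasWalk u v n}

/-- A hypergraph is connected if any two vertices are joined by a walk. -/
def Connected (H : FinsetHypergraph V) : Prop := ∀ u v : V, ∃ n, H.HasWalk u v n

/-- A hypergraph is simple if every edge has at least two vertices and
no edge is contained in another edge. -/
def Simple (H : FinsetHypergraph V) : Prop :=
  (∀ e ∈ H.edges, 2 ≤ e.card) ∧ ∀ e ∈ H.edges, ∀ f ∈ H.edges, e ⊆ f → e = f

/-- A hypergraph is loopless if every edge has at least two vertices. -/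
def Loopless (H : FinsetHypergraph V) : Prop := ∀ e ∈ H.edges, 2 ≤ e.card

/-- The rank: the maximum cardinality of an edge. -/
noncomputable def rank (H : FinsetHypergraph V) : ℕ := sSup (Finset.card '' H.edges)

/-- The anti-rank: the minimum cardinality of an edge. -/
noncomputable def antirank (H : FinsetHypergraph V) : ℕ := sInf (Finset.card '' H.edges)

/-- A proper coloring: no color class contains an edge. -/
def IsProperColoring (H : FinsetHypergraph V) {k : ℕ} (c : V → Fin k) : Prop :=
  ∀ e ∈ H.edges, ∀ i : Fin k, ¬ ∀ v ∈ e, c v = i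

/-- A proper strong coloring: a proper coloring in which the vertices of every
edge receive pairwise distinct colors. -/
def IsStrongColoring (H : FinsetHypergraph V) {k : ℕ} (c : V → Fin k) : Prop :=
  H.IsProperColoring c ∧ ∀ e ∈ H.edges, ∀ u ∈ e, ∀ v ∈ e, u ≠ v → c u ≠ c v

/-- The chromatic number: the least `k` admitting a proper `k`-coloring. -/
noncomputable def chromaticNumber (H : FinsetHypergraph V) : ℕ :=
  sInf {k : ℕ | ∃ c : V → Fin k, H.IsProperColoring c}

/-- The strong chromatic number: the least `k` admitting a proper strong `k`-coloring. -/
noncomputable def strongChromaticNumber (H : FinsetHypergraph V) : ℕ :=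
  sInf {k : ℕ | ∃ c : V → Fin k, H.IsStrongColoring c}

/-- The Helly property: every intersecting family of edges is a star. -/
def Helly (H : FinsetHypergraph V) : Prop :=
  ∀ E' ⊆ H.edges, (∀ e ∈ E', ∀ f ∈ E', ∃ x, x ∈ e ∧ x ∈ f) → ∃ v, ∀ e ∈ E', v ∈ e

/-- The covering number: the minimum cardinality of a set of vertices meeting every edge. -/
noncomputable def coverNumber (H : FinsetHypergraph V) : ℕ :=
  sInf {k : ℕ | ∃ T : Finset V, T.card = k ∧ ∀ e ∈ H.edges, ∃ v ∈ T, v ∈ e}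

/-- The Cartesian product of hypergraphs. -/
def cartProd (H₁ : FinsetHypergraph V₁) (H₂ : FinsetHypergraph V₂) : FinsetHypergraph (V₁ × V₂) where
  edges := {E | (∃ x, ∃ f ∈ H₂.edges, E = {x} ×ˢ f) ∨ ∃ e ∈ H₁.edges, ∃ y, E = e ×ˢ {y}}
  nonempty_edges := by
    rintro E (⟨x, f, hf, rfl⟩ | ⟨e, he, y, rfl⟩)
    · exact (Finset.singleton_nonempty x).product (H₂.nonempty_edges f hf)
    · exact (H₁.nonempty_edges e he).product (Finset.singleton_nonempty y)

section Products

variable [DecidableEq V₁] [DecidableEq V₂]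

/-- The minimal-rank-preserving direct product `H₁ ×̌ H₂`. -/
def minDirProd (H₁ : FinsetHypergraph V₁) (H₂ : FinsetHypergraph V₂) : FinsetHypergraph (V₁ × V₂) where
  edges := {E | ∃ e₁ ∈ H₁.edges, ∃ e₂ ∈ H₂.edges,
    E ⊆ e₁ ×ˢ e₂ ∧ E.card = min e₁.card e₂.card ∧
      (E.image Prod.fst).card = min e₁.card e₂.card ∧
      (E.image Prod.snd).card = min e₁.card e₂.card}
  nonempty_edges := by
    rintro E ⟨e₁, h₁, e₂, h₂, -, hc, -, -⟩
    rw [← Finset.card_pos, hc]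
    exact lt_min (Finset.card_pos.mpr (H₁.nonempty_edges e₁ h₁))
      (Finset.card_pos.mpr (H₂.nonempty_edges e₂ h₂))

/-- The maximal-rank-preserving direct product `H₁ ×̂ H₂`. -/
def maxDirProd (H₁ : FinsetHypergraph V₁) (H₂ : FinsetHypergraph V₂) : FinsetHypergraph (V₁ × V₂) where
  edges := {E | ∃ e₁ ∈ H₁.edges, ∃ e₂ ∈ H₂.edges,
    E ⊆ e₁ ×ˢ e₂ ∧ E.card = max e₁.card e₂.card ∧
      E.image Prod.fst = e₁ ∧ E.image Prod.snd = e₂}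
  nonempty_edges := by
    rintro E ⟨e₁, h₁, e₂, h₂, -, hc, -, -⟩
    rw [← Finset.card_pos, hc]
    exact lt_max_iff.mpr (Or.inl (Finset.card_pos.mpr (H₁.nonempty_edges e₁ h₁)))

/-- The non-rank-preserving direct product `H₁ ×̃ H₂`. -/
def nrDirProd (H₁ : FinsetHypergraph V₁) (H₂ : FinsetHypergraph V₂) : FinsetHypergraph (V₁ × V₂) where
  edges := {E | ∃ e ∈ H₁.edges, ∃ f ∈ H₂.edges, ∃ x ∈ e, ∃ y ∈ f,
    E = insert (x, y) ((e.erase x) ×ˢ (f.erase y))}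
  nonempty_edges := by
    rintro E ⟨e, -, f, -, x, -, y, -, rfl⟩
    exact Finset.insert_nonempty _ _

/-- The normal product `H₁ ⊠̌ H₂`: union of the Cartesian product edges and the
minimal-rank-preserving direct product edges. -/
def normalProd (H₁ : FinsetHypergraph V₁) (H₂ : FinsetHypergraph V₂) : FinsetHypergraph (V₁ × V₂) where
  edges := (H₁.cartProd H₂).edges ∪ (H₁.minDirProd H₂).edges
  nonempty_edges := by
    rintro E (h | h)
    · exact (H₁.cartProd H₂).nonempty_edges E h
    · exact (H₁.minDirProd H₂).nonempty_edges E h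

/-- The strong product `H₁ ⊠̂ H₂`: union of the Cartesian product edges and the
maximal-rank-preserving direct product edges. -/
def strongProd (H₁ : FinsetHypergraph V₁) (H₂ : FinsetHypergraph V₂) : FinsetHypergraph (V₁ × V₂) where
  edges := (H₁.cartProd H₂).edges ∪ (H₁.maxDirProd H₂).edges
  nonempty_edges := by
    rintro E (h | h)
    · exact (H₁.cartProd H₂).nonempty_edges E h
    · exact (H₁.maxDirProd H₂).nonempty_edges E h

/-- The lexicographic product `H₁ ∘ H₂`. -/
def lexProd (H₁ : FinsetHypergraph V₁) (H₂ : FinsetHypergraph V₂) : FinsetHypergraph (V₁ × V₂) where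
  edges := {E | (E.image Prod.fst ∈ H₁.edges ∧ (E.image Prod.fst).card = E.card) ∨
    ∃ x, ∃ e₂ ∈ H₂.edges, E = {x} ×ˢ e₂}
  nonempty_edges := by
    rintro E (⟨h₁, hc⟩ | ⟨x, e₂, h₂, rfl⟩)
    · rw [← Finset.card_pos, ← hc]
      exact Finset.card_pos.mpr (H₁.nonempty_edges _ h₁)
    · exact (Finset.singleton_nonempty x).product (H₂.nonempty_edges e₂ h₂)

end Products

/-- The square product `H₁ ■ H₂`. -/
def squareProd (H₁ : FinsetHypergraph V₁) (H₂ : FinsetHypergraph V₂) : FinsetHypergraph (V₁ × V₂) where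
  edges := {E | ∃ e₁ ∈ H₁.edges, ∃ e₂ ∈ H₂.edges, E = e₁ ×ˢ e₂}
  nonempty_edges := by
    rintro E ⟨e₁, h₁, e₂, h₂, rfl⟩
    exact (H₁.nonempty_edges e₁ h₁).product (H₂.nonempty_edges e₂ h₂)

/-- The 2-section of a hypergraph: distinct vertices are adjacent iff they lie
in a common edge. -/
def twoSection (H : FinsetHypergraph V) : SimpleGraph V where
  Adj x y := x ≠ y ∧ ∃ e ∈ H.edges, x ∈ e ∧ y ∈ e
  symm := ⟨by rintro x y ⟨hxy, e, he, hx, hy⟩; exact ⟨hxy.symm, e, he, hy, hx⟩⟩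
  loopless := ⟨by rintro x ⟨hx, -⟩; exact hx rfl⟩

end FinsetHypergraph

namespace SimpleGraph

variable {V₁ V₂ : Type*}

/-- The direct (tensor) product of simple graphs. -/
def directProd (G₁ : SimpleGraph V₁) (G₂ : SimpleGraph V₂) : SimpleGraph (V₁ × V₂) where
  Adj x y := G₁.Adj x.1 y.1 ∧ G₂.Adj x.2 y.2
  symm := ⟨fun _ _ ⟨h₁, h₂⟩ => ⟨h₁.symm, h₂.symm⟩⟩
  loopless := ⟨fun x h => G₁.loopless.irrefl x.1 h.1⟩

/-- The strong product of simple graphs. -/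
def strongGraphProd (G₁ : SimpleGraph V₁) (G₂ : SimpleGraph V₂) : SimpleGraph (V₁ × V₂) where
  Adj x y := x ≠ y ∧ ((x.1 = y.1 ∧ G₂.Adj x.2 y.2) ∨ (x.2 = y.2 ∧ G₁.Adj x.1 y.1) ∨
    (G₁.Adj x.1 y.1 ∧ G₂.Adj x.2 y.2))
  symm := by
    refine ⟨?_⟩
    rintro x y ⟨hne, (⟨h, h'⟩ | ⟨h, h'⟩ | ⟨h, h'⟩)⟩
    · exact ⟨hne.symm, Or.inl ⟨h.symm, h'.symm⟩⟩
    · exact ⟨hne.symm, Or.inr (Or.inl ⟨h.symm, h'.symm⟩)⟩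
    · exact ⟨hne.symm, Or.inr (Or.inr ⟨h.symm, h'.symm⟩)⟩
  loopless := ⟨by rintro x ⟨hx, -⟩; exact hx rfl⟩

/-- The lexicographic product of simple graphs. -/
def lexGraphProd (G₁ : SimpleGraph V₁) (G₂ : SimpleGraph V₂) : SimpleGraph (V₁ × V₂) where
  Adj x y := G₁.Adj x.1 y.1 ∨ (x.1 = y.1 ∧ G₂.Adj x.2 y.2)
  symm := by
    refine ⟨?_⟩
    rintro x y (h | ⟨h, h'⟩)
    · exact Or.inl h.symm
    · exact Or.inr ⟨h.symm, h'.symm⟩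
  loopless := by
    refine ⟨?_⟩
    rintro x (h | ⟨-, h⟩)
    · exact G₁.loopless.irrefl x.1 h
    · exact G₂.loopless.irrefl x.2 h

end SimpleGraph

/-!
Every edge of `H₁ ⊠̌ H₂` has at least two vertices, so an edge cannot be both injective on a
projection and contained in a fibre of it. Cartesian edges `{x} × f` lie in a fibre of the first
projection and are injective on the second, and symmetrically for `e × {y}`, while edges of the
minimal-rank-preserving direct product are injective on both projections. Hence an inclusion
`E ⊆ F` between edges only occurs between edges of the same kind. For Cartesian edges it reduces
to an inclusion of edges of a factor. An edge `E` of `H₁ ×̌ H₂` projects onto a whole edge of the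
factor realising the minimum, so if `E ⊆ F` that projection of `F` is the same edge and
`|F| ≤ |E|`.
-/

namespace FinsetHypergraph

variable {V V₁ V₂ : Type*}

theorem simple_iff {H : FinsetHypergraph V} :
    H.Simple ↔ H.Loopless ∧ IsAntichain (· ⊆ ·) H.edges :=
  and_congr_right' ⟨fun h _ he _ hf hne hsub => hne (h _ he _ hf hsub),
    fun h _ he _ hf hsub => h.eq he hf hsub⟩

theorem card_le_one_of_injOn_fst_of_subset {s : Finset (V₁ × V₂)} {x : V₁} {t : Finset V₂}
    (hs : Set.InjOn Prod.fst (s : Set (V₁ × V₂))) (hsub : s ⊆ {x} ×ˢ t) : s.card ≤ 1 := by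
  refine Finset.card_le_one.2 fun a ha b hb => hs ha hb ?_
  rw [Finset.mem_singleton.1 (Finset.mem_product.1 (hsub ha)).1,
    Finset.mem_singleton.1 (Finset.mem_product.1 (hsub hb)).1]

theorem card_le_one_of_injOn_snd_of_subset {s : Finset (V₁ × V₂)} {y : V₂} {t : Finset V₁}
    (hs : Set.InjOn Prod.snd (s : Set (V₁ × V₂))) (hsub : s ⊆ t ×ˢ {y}) : s.card ≤ 1 := by
  refine Finset.card_le_one.2 fun a ha b hb => hs ha hb ?_
  rw [Finset.mem_singleton.1 (Finset.mem_product.1 (hsub ha)).2,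
    Finset.mem_singleton.1 (Finset.mem_product.1 (hsub hb)).2]

theorem injOn_fst_product_singleton (e : Finset V₁) (y : V₂) :
    Set.InjOn Prod.fst ((e ×ˢ {y} : Finset (V₁ × V₂)) : Set (V₁ × V₂)) := by
  rintro ⟨a, b⟩ hab ⟨a', b'⟩ hab' (rfl : a = a')
  simp_all

theorem injOn_snd_singleton_product (x : V₁) (f : Finset V₂) :
    Set.InjOn Prod.snd (({x} ×ˢ f : Finset (V₁ × V₂)) : Set (V₁ × V₂)) := by
  rintro ⟨a, b⟩ hab ⟨a', b'⟩ hab' (rfl : b = b')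
  simp_all

theorem card_le_card_of_image_mem_antichain {α β : Type*} [DecidableEq β]
    {S : Set (Finset β)} (hS : IsAntichain (· ⊆ ·) S) {p : α → β} {E F : Finset α} {f : Finset β}
    (hEF : E ⊆ F) (hF : Set.InjOn p F) (hE : E.image p ∈ S) (hf : f ∈ S)
    (hFf : F.image p ⊆ f) : F.card ≤ E.card :=
  calc F.card = (F.image p).card := (Finset.card_image_of_injOn hF).symm
    _ ≤ f.card := Finset.card_le_card hFf
    _ = (E.image p).card := by
      rw [hS.eq hE hf ((Finset.image_subset_image hEF).trans hFf)]
    _ ≤ E.card := Finset.card_image_le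

section Products

variable [DecidableEq V₁] [DecidableEq V₂] {H₁ : FinsetHypergraph V₁} {H₂ : FinsetHypergraph V₂}
  {E : Finset (V₁ × V₂)}

theorem injOn_fst_of_mem_minDirProd (hE : E ∈ (H₁.minDirProd H₂).edges) :
    Set.InjOn Prod.fst (E : Set (V₁ × V₂)) := by
  obtain ⟨_, -, _, -, -, hc, hfst, -⟩ := hE
  exact Finset.card_image_iff.1 (hfst.trans hc.symm)

theorem injOn_snd_of_mem_minDirProd (hE : E ∈ (H₁.minDirProd H₂).edges) :
    Set.InjOn Prod.snd (E : Set (V₁ × V₂)) := by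
  obtain ⟨_, -, _, -, -, hc, -, hsnd⟩ := hE
  exact Finset.card_image_iff.1 (hsnd.trans hc.symm)

theorem exists_image_fst_subset_of_mem_minDirProd (hE : E ∈ (H₁.minDirProd H₂).edges) :
    ∃ e ∈ H₁.edges, E.image Prod.fst ⊆ e := by
  obtain ⟨e₁, he₁, e₂, -, hsub, -⟩ := hE
  exact ⟨e₁, he₁, (Finset.image_subset_image hsub).trans Finset.subset_product_image_fst⟩

theorem exists_image_snd_subset_of_mem_minDirProd (hE : E ∈ (H₁.minDirProd H₂).edges) :
    ∃ e ∈ H₂.edges, E.image Prod.snd ⊆ e := by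
  obtain ⟨_, -, e₂, he₂, hsub, -⟩ := hE
  exact ⟨e₂, he₂, (Finset.image_subset_image hsub).trans Finset.subset_product_image_snd⟩

theorem image_fst_mem_or_image_snd_mem_of_mem_minDirProd (hE : E ∈ (H₁.minDirProd H₂).edges) :
    E.image Prod.fst ∈ H₁.edges ∨ E.image Prod.snd ∈ H₂.edges := by
  obtain ⟨e₁, he₁, e₂, he₂, hsub, -, hfst, hsnd⟩ := hE
  rcases le_total e₁.card e₂.card with h | h
  · have himage : E.image Prod.fst = e₁ := Finset.eq_of_subset_of_card_le
      ((Finset.image_subset_image hsub).trans Finset.subset_product_image_fst)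
      (by rw [hfst, min_eq_left h])
    exact Or.inl (himage ▸ he₁)
  · have himage : E.image Prod.snd = e₂ := Finset.eq_of_subset_of_card_le
      ((Finset.image_subset_image hsub).trans Finset.subset_product_image_snd)
      (by rw [hsnd, min_eq_right h])
    exact Or.inr (himage ▸ he₂)

theorem isAntichain_minDirProd (a₁ : IsAntichain (· ⊆ ·) H₁.edges)
    (a₂ : IsAntichain (· ⊆ ·) H₂.edges) : IsAntichain (· ⊆ ·) (H₁.minDirProd H₂).edges := by
  intro E hE F hF hne hEF
  refine hne (Finset.eq_of_subset_of_card_le hEF ?_)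
  rcases image_fst_mem_or_image_snd_mem_of_mem_minDirProd hE with h | h
  · obtain ⟨f, hf, hFf⟩ := exists_image_fst_subset_of_mem_minDirProd hF
    exact card_le_card_of_image_mem_antichain a₁ hEF (injOn_fst_of_mem_minDirProd hF) h hf hFf
  · obtain ⟨f, hf, hFf⟩ := exists_image_snd_subset_of_mem_minDirProd hF
    exact card_le_card_of_image_mem_antichain a₂ hEF (injOn_snd_of_mem_minDirProd hF) h hf hFf

theorem Loopless.normalProd (h₁ : H₁.Loopless) (h₂ : H₂.Loopless) :
    (H₁.normalProd H₂).Loopless := by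
  rintro E ((⟨x, f, hf, rfl⟩ | ⟨e, he, y, rfl⟩) | ⟨e₁, he₁, e₂, he₂, -, hc, -⟩)
  · simpa using h₂ f hf
  · simpa using h₁ e he
  · exact hc ▸ le_min (h₁ e₁ he₁) (h₂ e₂ he₂)

theorem exists_eq_singleton_product_of_subset (hE : E ∈ (H₁.normalProd H₂).edges)
    (hE₂ : 2 ≤ E.card) {x : V₁} {t : Finset V₂} (hsub : E ⊆ {x} ×ˢ t) :
    ∃ f ∈ H₂.edges, E = {x} ×ˢ f := by
  rcases hE with (⟨x', f, hf, rfl⟩ | ⟨e, -, y, rfl⟩) | hE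
  · refine ⟨f, hf, ?_⟩
    have hx : ({x'} : Finset V₁) ⊆ {x} := by
      simpa only [Finset.product_image_fst (H₂.nonempty_edges f hf)] using
        (Finset.image_subset_image (f := Prod.fst) hsub).trans Finset.subset_product_image_fst
    rw [Finset.singleton_subset_singleton.1 hx]
  · have := card_le_one_of_injOn_fst_of_subset (injOn_fst_product_singleton e y) hsub
    omega
  · have := card_le_one_of_injOn_fst_of_subset (injOn_fst_of_mem_minDirProd hE) hsub
    omega

theorem exists_eq_product_singleton_of_subset (hE : E ∈ (H₁.normalProd H₂).edges)
    (hE₂ : 2 ≤ E.card) {y : V₂} {t : Finset V₁} (hsub : E ⊆ t ×ˢ {y}) :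
    ∃ e ∈ H₁.edges, E = e ×ˢ {y} := by
  rcases hE with (⟨x, f, -, rfl⟩ | ⟨e, he, y', rfl⟩) | hE
  · have := card_le_one_of_injOn_snd_of_subset (injOn_snd_singleton_product x f) hsub
    omega
  · refine ⟨e, he, ?_⟩
    have hy : ({y'} : Finset V₂) ⊆ {y} := by
      simpa only [Finset.product_image_snd (H₁.nonempty_edges e he)] using
        (Finset.image_subset_image (f := Prod.snd) hsub).trans Finset.subset_product_image_snd
    rw [Finset.singleton_subset_singleton.1 hy]
  · have := card_le_one_of_injOn_snd_of_subset (injOn_snd_of_mem_minDirProd hE) hsub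
    omega

theorem mem_minDirProd_of_injOn (hE : E ∈ (H₁.normalProd H₂).edges) (hE₂ : 2 ≤ E.card)
    (hfst : Set.InjOn Prod.fst (E : Set (V₁ × V₂)))
    (hsnd : Set.InjOn Prod.snd (E : Set (V₁ × V₂))) :
    E ∈ (H₁.minDirProd H₂).edges := by
  rcases hE with (⟨x, f, -, rfl⟩ | ⟨e, -, y, rfl⟩) | hE
  · have := card_le_one_of_injOn_fst_of_subset hfst subset_rfl
    omega
  · have := card_le_one_of_injOn_snd_of_subset hsnd subset_rfl
    omega
  · exact hE

theorem isAntichain_normalProd (l₁ : H₁.Loopless) (l₂ : H₂.Loopless)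
    (a₁ : IsAntichain (· ⊆ ·) H₁.edges) (a₂ : IsAntichain (· ⊆ ·) H₂.edges) :
    IsAntichain (· ⊆ ·) (H₁.normalProd H₂).edges := by
  intro E hE F hF hne hEF
  have hE₂ := l₁.normalProd l₂ E hE
  rcases hF with (⟨x, f', hf', rfl⟩ | ⟨e', he', y, rfl⟩) | hF
  · obtain ⟨f, hf, rfl⟩ := exists_eq_singleton_product_of_subset hE hE₂ hEF
    have hff' : f ⊆ f' := by
      simpa only [Finset.product_image_snd (Finset.singleton_nonempty x)] using
        Finset.image_subset_image (f := Prod.snd) hEF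
    exact hne (by rw [a₂.eq hf hf' hff'])
  · obtain ⟨e, he, rfl⟩ := exists_eq_product_singleton_of_subset hE hE₂ hEF
    have hee' : e ⊆ e' := by
      simpa only [Finset.product_image_fst (Finset.singleton_nonempty y)] using
        Finset.image_subset_image (f := Prod.fst) hEF
    exact hne (by rw [a₁.eq he he' hee'])
  · have hE' := mem_minDirProd_of_injOn hE hE₂ ((injOn_fst_of_mem_minDirProd hF).mono hEF)
      ((injOn_snd_of_mem_minDirProd hF).mono hEF)
    exact isAntichain_minDirProd a₁ a₂ hE' hF hne hEF

end Products

end FinsetHypergraph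

theorem simple_normalProd_general {V₁ V₂ : Type*} [DecidableEq V₁] [DecidableEq V₂]
    (H₁ : FinsetHypergraph V₁) (H₂ : FinsetHypergraph V₂)
    (h₁ : H₁.Simple) (h₂ : H₂.Simple) :
    (H₁.normalProd H₂).Simple := by
  rw [FinsetHypergraph.simple_iff] at h₁ h₂ ⊢
  exact ⟨h₁.1.normalProd h₂.1, FinsetHypergraph.isAntichain_normalProd h₁.1 h₂.1 h₁.2 h₂.2⟩

/-- the normal product of simple hypergraphs is simple. -/
theorem simple_normalProd {V₁ V₂ : Type*} [Fintype V₁] [Nonempty V₁] [DecidableEq V₁]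
    [Fintype V₂] [Nonempty V₂] [DecidableEq V₂] (H₁ : FinsetHypergraph V₁) (H₂ : FinsetHypergraph V₂)
    (h₁ : H₁.Simple) (h₂ : H₂.Simple) :
    (H₁.normalProd H₂).Simple :=
  simple_normalProd_general H₁ H₂ h₁ h₂
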